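/- Define rational functions λ(c) = −(5c² + 33c − 44)/(7(5c+11)(2c−1)(c+20)) and μ(c) = −16/(7(2c−1)(c+20)). Then for every complex number c not in {1/2, −20, −11/5, −12, 1/4} the following three identities hold: (i) 32·λ(c) = (2(5c² + 33c − 44)/(5c+11))·μ(c); (ii) −128·(49·λ(c)²·(2c−1)(2c−25) − 1)/(63(2c−1)(2c+24)(4c−1)) = 21c(5c+22)·μ(c)²/(5c+11)²; (iii) −32·(2c−4)·(49·λ(c)²·(2c−1)(2c−25) − 1)/(441(2c−1)(2c+24)(4c−1)) = 3c(c−2)(5c+22)·μ(c)²/(2(5c+11)²). -/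

import Mathlib

/-!
Both `λ(c)` and `μ(c)` carry the factor `1 / (7(2c - 1)(c + 20))`, so
`16 λ = (5c² + 33c - 44) / (5c + 11) · μ`, which is (i). As `μ² (7(2c - 1)(c + 20))² = 256`,
the quantity `64 (5c + 11)² (49 λ² (2c - 1)(2c - 25) - 1)` equals `(49/4)(2c - 1) μ²` times
`(5c² + 33c - 44)² (2c - 25) - (5c + 11)² (2c - 1)(c + 20)² = -108 c (c + 12)(5c + 22)(4c - 1)`;
the factors `(2c - 1)(c + 12)(4c - 1)` then cancel the denominators of (ii) and (iii).
-/

/-- The truncation-curve parameter `λ(c)` realizing `(V_c^{⊗2})^{S₂}` as a quotient of the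
universal two-parameter even spin vertex algebra `W^{ev}(2c, λ)`. -/
noncomputable def lambdaTrunc (c : ℂ) : ℂ :=
  -(5 * c ^ 2 + 33 * c - 44) / (7 * (5 * c + 11) * (2 * c - 1) * (c + 20))

/-- The normalization constant `μ(c)` of the weight-4 primary field. -/
noncomputable def muNorm (c : ℂ) : ℂ := -16 / (7 * (2 * c - 1) * (c + 20))

lemma truncation_discriminant_factor {R : Type*} [CommRing R] (c : R) :
    (5 * c ^ 2 + 33 * c - 44) ^ 2 * (2 * c - 25) - (5 * c + 11) ^ 2 * (2 * c - 1) * (c + 20) ^ 2 =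
      -108 * c * (c + 12) * (5 * c + 22) * (4 * c - 1) := by
  ring

lemma sixteen_mul_lambdaTrunc (c : ℂ) :
    16 * lambdaTrunc c = (5 * c ^ 2 + 33 * c - 44) / (5 * c + 11) * muNorm c := by
  unfold lambdaTrunc muNorm
  rw [div_mul_div_comm]
  ring

lemma muNorm_sq_mul {c : ℂ} (h1 : 2 * c - 1 ≠ 0) (h2 : c + 20 ≠ 0) :
    muNorm c ^ 2 * (7 * (2 * c - 1) * (c + 20)) ^ 2 = 256 := by
  rw [muNorm, div_pow, div_mul_cancel₀ _ (by simp [h1, h2])]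
  norm_num

lemma mul_sq_lambdaTrunc_sub_one {c : ℂ} (h1 : 2 * c - 1 ≠ 0) (h2 : c + 20 ≠ 0)
    (h3 : 5 * c + 11 ≠ 0) :
    64 * (5 * c + 11) ^ 2 * (49 * lambdaTrunc c ^ 2 * (2 * c - 1) * (2 * c - 25) - 1) =
      -1323 * c * (c + 12) * (5 * c + 22) * (4 * c - 1) * (2 * c - 1) * muNorm c ^ 2 := by
  set P := 5 * c ^ 2 + 33 * c - 44
  set Q := 5 * c + 11
  have hlam : 16 * Q * lambdaTrunc c = P * muNorm c := by
    rw [mul_right_comm, sixteen_mul_lambdaTrunc, div_mul_eq_mul_div, div_mul_cancel₀ _ h3]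
  linear_combination
    49 / 4 * (2 * c - 1) * (2 * c - 25) * (16 * Q * lambdaTrunc c + P * muNorm c) * hlam
    + Q ^ 2 / 4 * muNorm_sq_mul h1 h2
    + 49 / 4 * (2 * c - 1) * muNorm c ^ 2 * truncation_discriminant_factor c

/-- For every complex `c ∉ {1/2, -20, -11/5, -12, 1/4}`, the three
identities matching the fourth-product OPE coefficients of the normalized weight-4 primary
of `(V_c^{⊗2})^{S₂}` with those of the universal even spin algebra `W^{ev}(2c, λ(c))` hold. -/
theorem truncation_curve_identities (c : ℂ) (h1 : c ≠ 1 / 2) (h2 : c ≠ -20)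
    (h3 : c ≠ -11 / 5) (h4 : c ≠ -12) (h5 : c ≠ 1 / 4) :
    (32 * lambdaTrunc c = 2 * (5 * c ^ 2 + 33 * c - 44) / (5 * c + 11) * muNorm c) ∧
    (-(128 * (49 * lambdaTrunc c ^ 2 * (2 * c - 1) * (2 * c - 25) - 1)) /
        (63 * (2 * c - 1) * (2 * c + 24) * (4 * c - 1)) =
      21 * c * (5 * c + 22) * muNorm c ^ 2 / (5 * c + 11) ^ 2) ∧
    (-(32 * (2 * c - 4) * (49 * lambdaTrunc c ^ 2 * (2 * c - 1) * (2 * c - 25) - 1)) /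
        (441 * (2 * c - 1) * (2 * c + 24) * (4 * c - 1)) =
      3 * c * (c - 2) * (5 * c + 22) * muNorm c ^ 2 / (2 * (5 * c + 11) ^ 2)) := by
  have e1 : 2 * c - 1 ≠ 0 := fun h => h1 (by linear_combination h / 2)
  have e2 : c + 20 ≠ 0 := fun h => h2 (by linear_combination h)
  have e3 : 5 * c + 11 ≠ 0 := fun h => h3 (by linear_combination h / 5)
  have e4 : 2 * c + 24 ≠ 0 := fun h => h4 (by linear_combination h / 2)
  have e5 : 4 * c - 1 ≠ 0 := fun h => h5 (by linear_combination h / 4)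
  have key := mul_sq_lambdaTrunc_sub_one e1 e2 e3
  refine ⟨?_, ?_, ?_⟩
  · linear_combination 2 * sixteen_mul_lambdaTrunc c
  · rw [div_eq_div_iff (by simp [e1, e4, e5]) (by simp [e3])]
    linear_combination (-2) * key
  · rw [div_eq_div_iff (by simp [e1, e4, e5]) (by simp [e3])]
    linear_combination (-2 * (c - 2)) * key
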